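/- A ring R is S-coherent (every finitely generated ideal of R is S-finitely presented) if and only if for every finitely generated ideal I of R and every a ∈ R, the quotient ideal (I : a) = {x ∈ R : xa ∈ I} is an S-finite ideal of R. -/

import Mathlib

def IsSFinite {R : Type*} [CommRing R] (S : Submonoid R) (M : Type*) [AddCommGroup M]
    [Module R M] : Prop :=
  ∃ s ∈ S, ∃ N : Submodule R M, N.FG ∧ ∀ m : M, s • m ∈ N

def IsSFinitelyPresented {R : Type*} [CommRing R] (S : Submonoid R) (M : Type*)
    [AddCommGroup M] [Module R M] : Prop :=
  ∃ (n : ℕ) (f : (Fin n → R) →ₗ[R] M), Function.Surjective f ∧ IsSFinite S (LinearMap.ker f)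

/-- An ideal `I` is `S`-finite: `s • I ⊆ J ⊆ I` for some finitely generated ideal `J`, `s ∈ S`. -/
def IsSFiniteIdeal {R : Type*} [CommRing R] (S : Submonoid R) (I : Ideal R) : Prop :=
  ∃ s ∈ S, ∃ J : Ideal R, J.FG ∧ J ≤ I ∧ ∀ x ∈ I, s * x ∈ J

/-- `R` is `S`-coherent if every finitely generated ideal is `S`-finitely presented. -/
def IsSCoherentRing (R : Type*) [CommRing R] (S : Submonoid R) : Prop :=
  ∀ I : Ideal R, I.FG → IsSFinitelyPresented S ↥I


/-!
For `v : Fin (n + 1) → R`, projecting the relation module `ker (c ↦ ∑ cᵢ vᵢ)` to the first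
coordinate gives the colon ideal `(v₁, …, vₙ) : v₀`, and the kernel of this projection is the
relation module of `(v₁, …, vₙ)`. Since `S`-finiteness passes to images and to extensions, `S`-finite
colon ideals give `S`-finite relation modules by induction on `n`. Conversely, a Schanuel-type
argument shows that once one finite free presentation of an ideal has `S`-finite kernel, all do;
the colon ideal is the image of such a kernel.
-/

section SFinite

variable {R : Type*} [CommRing R] {S : Submonoid R} {M P : Type*} [AddCommGroup M] [Module R M]
  [AddCommGroup P] [Module R P]

theorem isSFinite_submodule_iff {N : Submodule R M} :
    IsSFinite S N ↔ ∃ s ∈ S, ∃ Q : Submodule R M, Q.FG ∧ Q ≤ N ∧ ∀ x ∈ N, s • x ∈ Q := by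
  constructor
  · rintro ⟨s, hs, Q, hQ, hsQ⟩
    refine ⟨s, hs, Q.map N.subtype, hQ.map _, Submodule.map_subtype_le N Q, fun x hx => ?_⟩
    exact ⟨s • ⟨x, hx⟩, hsQ _, rfl⟩
  · rintro ⟨s, hs, Q, hQ, hQN, hsQ⟩
    refine ⟨s, hs, Q.comap N.subtype, ?_, fun x => hsQ x x.2⟩
    apply Submodule.fg_of_fg_map_injective N.subtype N.injective_subtype
    rwa [Submodule.map_comap_subtype, inf_eq_right.2 hQN]

theorem isSFiniteIdeal_iff_isSFinite {I : Ideal R} : IsSFiniteIdeal S I ↔ IsSFinite S I :=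
  isSFinite_submodule_iff.symm

theorem isSFinite_of_fg {N : Submodule R M} (hN : N.FG) : IsSFinite S N :=
  isSFinite_submodule_iff.2 ⟨1, S.one_mem, N, hN, le_rfl, fun x hx => by rwa [one_smul]⟩

theorem IsSFinite.map {N : Submodule R M} (h : IsSFinite S N) (f : M →ₗ[R] P) :
    IsSFinite S (N.map f) := by
  obtain ⟨s, hs, Q, hQ, hQN, hsQ⟩ := isSFinite_submodule_iff.1 h
  refine isSFinite_submodule_iff.2 ⟨s, hs, Q.map f, hQ.map f, Submodule.map_mono hQN, ?_⟩
  rintro _ ⟨x, hx, rfl⟩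
  rw [← map_smul]
  exact Submodule.mem_map_of_mem (hsQ x hx)

theorem Submodule.FG.exists_fg_le_of_le_map {f : M →ₗ[R] P} {N : Submodule R M}
    {Q : Submodule R P} (hQ : Q.FG) (hQN : Q ≤ N.map f) :
    ∃ Q' : Submodule R M, Q'.FG ∧ Q' ≤ N ∧ Q ≤ Q'.map f := by
  induction Q, hQ using Submodule.fg_induction with
  | singleton y =>
    obtain ⟨x, hx, rfl⟩ := hQN (Submodule.mem_span_singleton_self y)
    refine ⟨R ∙ x, Submodule.fg_span_singleton x, (Submodule.span_singleton_le_iff_mem _ _).2 hx,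
      ?_⟩
    rw [Submodule.map_span, Set.image_singleton]
  | sup Q₁ Q₂ _ _ ih₁ ih₂ =>
    obtain ⟨Q₁', hQ₁', hQ₁'N, hQ₁Q₁'⟩ := ih₁ (le_sup_left.trans hQN)
    obtain ⟨Q₂', hQ₂', hQ₂'N, hQ₂Q₂'⟩ := ih₂ (le_sup_right.trans hQN)
    refine ⟨Q₁' ⊔ Q₂', hQ₁'.sup hQ₂', sup_le hQ₁'N hQ₂'N, ?_⟩
    rw [Submodule.map_sup]
    exact sup_le_sup hQ₁Q₁' hQ₂Q₂'

theorem IsSFinite.of_map_of_inf_ker (f : M →ₗ[R] P) {N : Submodule R M}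
    (hmap : IsSFinite S (N.map f)) (hker : IsSFinite S ↥(N ⊓ LinearMap.ker f)) :
    IsSFinite S N := by
  obtain ⟨s, hs, Q₁, hQ₁, hQ₁N, hsQ₁⟩ := isSFinite_submodule_iff.1 hmap
  obtain ⟨t, ht, Q₂, hQ₂, hQ₂N, htQ₂⟩ := isSFinite_submodule_iff.1 hker
  obtain ⟨Q₁', hQ₁', hQ₁'N, hQ₁Q₁'⟩ := hQ₁.exists_fg_le_of_le_map hQ₁N
  refine isSFinite_submodule_iff.2 ⟨t * s, S.mul_mem ht hs, Q₁' ⊔ Q₂, hQ₁'.sup hQ₂,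
    sup_le hQ₁'N (hQ₂N.trans inf_le_left), fun x hx => ?_⟩
  obtain ⟨y, hy, hfy⟩ := hQ₁Q₁' (hsQ₁ _ (Submodule.mem_map_of_mem hx))
  have hdiff : s • x - y ∈ N ⊓ LinearMap.ker f :=
    ⟨N.sub_mem (N.smul_mem s hx) (hQ₁'N hy), by simp [hfy]⟩
  have hsplit : (t * s) • x = t • y + t • (s • x - y) := by
    rw [smul_sub, mul_smul, add_sub_cancel]
  rw [hsplit]
  exact add_mem (Submodule.mem_sup_left (Q₁'.smul_mem t hy))
    (Submodule.mem_sup_right (htQ₂ _ hdiff))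

theorem IsSFinite.ker_of_projective {F G : Type*} [AddCommGroup F] [Module R F]
    [Module.Projective R F] [AddCommGroup G] [Module R G] [Module.Finite R G]
    {f : F →ₗ[R] M} {g : G →ₗ[R] M} (hf : Function.Surjective f) (hg : Function.Surjective g)
    (h : IsSFinite S (LinearMap.ker f)) : IsSFinite S (LinearMap.ker g) := by
  obtain ⟨σ, hσ⟩ := Module.projective_lifting_property g f hg
  -- `G = range σ + ker g`, so `ker g` is an extension of the finitely generated `G ⧸ range σ`
  -- by `ker g ⊓ range σ = σ (ker f)`.
  have hgσ : ∀ x, g (σ x) = f x := LinearMap.congr_fun hσ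
  refine .of_map_of_inf_ker (LinearMap.range σ).mkQ ?_ ?_
  · have htop : (LinearMap.ker g).map (LinearMap.range σ).mkQ = ⊤ := by
      rw [Submodule.map_mkQ_eq_top, eq_top_iff]
      intro y _
      obtain ⟨x, hx⟩ := hf (g y)
      have hker : y - σ x ∈ LinearMap.ker g := by simp [hgσ, hx]
      rw [← add_sub_cancel (σ x) y]
      exact add_mem (Submodule.mem_sup_left (LinearMap.mem_range_self σ x))
        (Submodule.mem_sup_right hker)
    rw [htop]
    exact isSFinite_of_fg Module.Finite.fg_top
  · have hinf : LinearMap.ker g ⊓ LinearMap.range σ = (LinearMap.ker f).map σ := by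
      ext y
      constructor
      · rintro ⟨hy, x, rfl⟩
        exact ⟨x, by simpa [hgσ] using hy, rfl⟩
      · rintro ⟨x, hx, rfl⟩
        exact ⟨by simpa [hgσ] using hx, x, rfl⟩
    rw [Submodule.ker_mkQ, hinf]
    exact h.map σ

theorem map_proj_zero_ker_linearCombination_cons {n : ℕ} (a : R) (w : Fin n → R) :
    (LinearMap.ker (Fintype.linearCombination R (Fin.cons a w : Fin (n + 1) → R))).map
        (LinearMap.proj 0) = (Ideal.span (Set.range w)).colon (Ideal.span {a}) := by
  ext x
  rw [Submodule.mem_colon_span_singleton, Submodule.mem_span_range_iff_exists_fun]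
  constructor
  · rintro ⟨c, hc, rfl⟩
    rw [SetLike.mem_coe, LinearMap.mem_ker, Fintype.linearCombination_apply,
      Fin.sum_univ_succ] at hc
    refine ⟨fun i => -c i.succ, ?_⟩
    simp only [Fin.cons_zero, Fin.cons_succ] at hc
    simp only [neg_smul, Finset.sum_neg_distrib, LinearMap.proj_apply]
    exact (eq_neg_of_add_eq_zero_left hc).symm
  · rintro ⟨c, hc⟩
    refine ⟨Fin.cons x (-c), ?_, rfl⟩
    rw [SetLike.mem_coe, LinearMap.mem_ker, Fintype.linearCombination_apply, Fin.sum_univ_succ]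
    simp only [Fin.cons_zero, Fin.cons_succ, Pi.neg_apply, neg_smul, Finset.sum_neg_distrib, hc,
      add_neg_cancel]

theorem ker_linearCombination_cons_inf_ker_proj_zero {n : ℕ} (a : R) (w : Fin n → R) :
    LinearMap.ker (Fintype.linearCombination R (Fin.cons a w : Fin (n + 1) → R)) ⊓
        LinearMap.ker (LinearMap.proj 0) =
      (LinearMap.ker (Fintype.linearCombination R w)).map (LinearMap.vecCons 0 LinearMap.id) := by
  ext c
  constructor
  · rintro ⟨hc, hc0⟩
    rw [SetLike.mem_coe, LinearMap.mem_ker, LinearMap.proj_apply] at hc0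
    rw [SetLike.mem_coe, LinearMap.mem_ker, Fintype.linearCombination_apply,
      Fin.sum_univ_succ] at hc
    refine ⟨Fin.tail c, ?_, ?_⟩
    · simpa [Fintype.linearCombination_apply, hc0, Fin.tail] using hc
    · ext i
      cases i using Fin.cases <;> simp [hc0, Fin.tail]
  · rintro ⟨d, hd, rfl⟩
    rw [SetLike.mem_coe, LinearMap.mem_ker, Fintype.linearCombination_apply] at hd
    simpa [Fintype.linearCombination_apply, Fin.sum_univ_succ] using hd

theorem isSFinite_ker_linearCombination
    (hcolon : ∀ I : Ideal R, I.FG → ∀ a : R, IsSFiniteIdeal S (I.colon (Ideal.span {a}))) :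
    ∀ {n : ℕ} (v : Fin n → R), IsSFinite S (LinearMap.ker (Fintype.linearCombination R v))
  | 0, v => isSFinite_of_fg <| by
      rw [Submodule.eq_bot_of_subsingleton (p := LinearMap.ker _)]
      exact Submodule.fg_bot
  | n + 1, v => by
      rw [← Fin.cons_self_tail v]
      refine .of_map_of_inf_ker (LinearMap.proj 0) ?_ ?_
      · rw [map_proj_zero_ker_linearCombination_cons, ← isSFiniteIdeal_iff_isSFinite]
        exact hcolon _ (Submodule.fg_span (Set.finite_range _)) _
      · rw [ker_linearCombination_cons_inf_ker_proj_zero]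
        exact (isSFinite_ker_linearCombination hcolon _).map _

end SFinite

theorem scoherent_iff_colon_sfinite {R : Type*} [CommRing R] (S : Submonoid R) :
    IsSCoherentRing R S ↔
      ∀ I : Ideal R, I.FG → ∀ a : R, IsSFiniteIdeal S (I.colon (Ideal.span {a})) := by
  constructor
  · intro hcoh I hI a
    obtain ⟨m, w, rfl⟩ := Submodule.fg_iff_exists_fin_generating_family.1 hI
    set v : Fin (m + 1) → R := Fin.cons a w
    have hJ : (LinearMap.range (Fintype.linearCombination R v)).FG := by
      rw [Fintype.range_linearCombination]
      exact Submodule.fg_span (Set.finite_range v)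
    obtain ⟨n, f, hf, hker⟩ := hcoh _ hJ
    have hkerv : IsSFinite S (LinearMap.ker (Fintype.linearCombination R v)) := by
      rw [← LinearMap.ker_rangeRestrict]
      exact hker.ker_of_projective hf (LinearMap.surjective_rangeRestrict _)
    rw [isSFiniteIdeal_iff_isSFinite, ← map_proj_zero_ker_linearCombination_cons]
    exact hkerv.map _
  · intro hcolon I hI
    obtain ⟨n, v, rfl⟩ := Submodule.fg_iff_exists_fin_generating_family.1 hI
    rw [← Fintype.range_linearCombination]
    refine ⟨n, (Fintype.linearCombination R v).rangeRestrict,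
      LinearMap.surjective_rangeRestrict _, ?_⟩
    rw [LinearMap.ker_rangeRestrict]
    exact isSFinite_ker_linearCombination hcolon v
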